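/- Let σ be a term ordering, F a finite set of nonzero polynomials in Q[x_1,...,x_n], and G_σ the reduced σ-Gröbner basis of the ideal ⟨F⟩. A prime p is σ-Pauer-lucky for prim(G_σ) if and only if p does not divide den(G_σ) (i.e. p is σ-good for ⟨F⟩). -/

import Mathlib

open MvPolynomial
open scoped Classical

namespace GB

variable {n : ℕ}

/-- The σ-leading exponent (leading term, as a power-product) of a polynomial;
`0` for the zero polynomial. -/
noncomputable def lexp {K : Type*} [CommSemiring K] (m : MonomialOrder (Fin n))
    (f : MvPolynomial (Fin n) K) : Fin n →₀ ℕ :=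
  m.toSyn.symm (f.support.sup fun d => m.toSyn d)

/-- The σ-leading coefficient. -/
noncomputable def lcoeff {K : Type*} [CommSemiring K] (m : MonomialOrder (Fin n))
    (f : MvPolynomial (Fin n) K) : K :=
  MvPolynomial.coeff (lexp m f) f

/-- The σ-leading monomial (leading coefficient times leading power-product). -/
noncomputable def LM {K : Type*} [CommSemiring K] (m : MonomialOrder (Fin n))
    (f : MvPolynomial (Fin n) K) : MvPolynomial (Fin n) K :=
  monomial (lexp m f) (lcoeff m f)

/-- The leading term ideal `LT_σ(I)` of an ideal, over a field. -/
noncomputable def LTIdeal {K : Type*} [Field K] (m : MonomialOrder (Fin n))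
    (I : Ideal (MvPolynomial (Fin n) K)) : Ideal (MvPolynomial (Fin n) K) :=
  Ideal.span {t | ∃ f ∈ I, f ≠ 0 ∧ t = monomial (lexp m f) (1 : K)}

/-- `G` is a σ-Gröbner basis of `I` (over a field). -/
def IsGB {K : Type*} [Field K] (m : MonomialOrder (Fin n))
    (G : Finset (MvPolynomial (Fin n) K)) (I : Ideal (MvPolynomial (Fin n) K)) : Prop :=
  (0 : MvPolynomial (Fin n) K) ∉ G ∧ (G : Set (MvPolynomial (Fin n) K)) ⊆ I ∧
    Ideal.span (G : Set (MvPolynomial (Fin n) K)) = I ∧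
    ∀ f ∈ I, f ≠ 0 → ∃ g ∈ G, lexp m g ≤ lexp m f

/-- `G` is the reduced σ-Gröbner basis of `I`. -/
def IsReducedGB {K : Type*} [Field K] (m : MonomialOrder (Fin n))
    (G : Finset (MvPolynomial (Fin n) K)) (I : Ideal (MvPolynomial (Fin n) K)) : Prop :=
  IsGB m G I ∧ (∀ g ∈ G, lcoeff m g = 1) ∧
    ∀ g ∈ G, ∀ d ∈ g.support, ∀ g' ∈ G, g' ≠ g → ¬ lexp m g' ≤ d

/-- `G` is a strong σ-Gröbner basis of the ideal `J ⊆ ℤ[x]` it generates. -/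
def IsStrongGB (m : MonomialOrder (Fin n)) (G : Finset (MvPolynomial (Fin n) ℤ))
    (J : Ideal (MvPolynomial (Fin n) ℤ)) : Prop :=
  (0 : MvPolynomial (Fin n) ℤ) ∉ G ∧ Ideal.span (G : Set (MvPolynomial (Fin n) ℤ)) = J ∧
    ∀ f ∈ J, f ≠ 0 → ∃ g ∈ G, LM m g ∣ LM m f

/-- `G` is a minimal strong σ-Gröbner basis of `J`. -/
def IsMinStrongGB (m : MonomialOrder (Fin n)) (G : Finset (MvPolynomial (Fin n) ℤ))
    (J : Ideal (MvPolynomial (Fin n) ℤ)) : Prop :=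
  IsStrongGB m G J ∧ ∀ g ∈ G, ∀ g' ∈ G, g ≠ g' → ¬ LM m g ∣ LM m g'

/-- The denominator of a polynomial with rational coefficients. -/
def den (f : MvPolynomial (Fin n) ℚ) : ℕ :=
  f.support.lcm fun d => (MvPolynomial.coeff d f).den

/-- The denominator of a finite set of polynomials. -/
noncomputable def denF (G : Finset (MvPolynomial (Fin n) ℚ)) : ℕ :=
  G.lcm den

/-- `f` scaled by `den f`, as an integer polynomial. -/
noncomputable def intScale (f : MvPolynomial (Fin n) ℚ) : MvPolynomial (Fin n) ℤ :=
  f.support.sum fun d => monomial d (MvPolynomial.coeff d f * (den f : ℚ)).num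

/-- The primitive integral part of a polynomial with rational coefficients. -/
noncomputable def primQ (f : MvPolynomial (Fin n) ℚ) : MvPolynomial (Fin n) ℤ :=
  (intScale f).support.sum fun d =>
    monomial d (MvPolynomial.coeff d (intScale f) /
      ((intScale f).support.gcd fun e => MvPolynomial.coeff e (intScale f)))

/-- Reduction of a rational number modulo `p` (meaningful when `p ∤ a.den`). -/
noncomputable def redQ (p : ℕ) (a : ℚ) : ZMod p :=
  (a.num : ZMod p) * (a.den : ZMod p)⁻¹

/-- Coefficientwise reduction modulo `p` of a polynomial with rational coefficients
(meaningful when `p` divides no coefficient denominator). -/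
noncomputable def piP (p : ℕ) (f : MvPolynomial (Fin n) ℚ) :
    MvPolynomial (Fin n) (ZMod p) :=
  f.support.sum fun d => monomial d (redQ p (MvPolynomial.coeff d f))

/-- A σ-ordered tuple of (necessarily distinct) power-products. -/
def SOrd (m : MonomialOrder (Fin n)) (L : List (Fin n →₀ ℕ)) : Prop :=
  L.Pairwise fun a b => m.toSyn a < m.toSyn b

/-- `T'` strictly σ-precedes `T`:  either `T` is a proper prefix of `T'`, or at the first
index where they differ (within both lengths) the entry of `T'` is σ-smaller. -/
def Prec (m : MonomialOrder (Fin n)) (T' T : List (Fin n →₀ ℕ)) : Prop :=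
  (T <+: T' ∧ T ≠ T') ∨
    ∃ k, k < T.length ∧ k < T'.length ∧ T.take k = T'.take k ∧
      m.toSyn (T'.getD k 0) < m.toSyn (T.getD k 0)

/-- `T'` σ-precedes or equals `T`. -/
def PrecEq (m : MonomialOrder (Fin n)) (T' T : List (Fin n →₀ ℕ)) : Prop :=
  Prec m T' T ∨ T' = T

/-- The minimal generating set of the monomial ideal `LT_σ(I)`: the set of leading
power-products of nonzero elements of `I` which are minimal w.r.t. divisibility. -/
def minGenSet {K : Type*} [Field K] (m : MonomialOrder (Fin n))
    (I : Ideal (MvPolynomial (Fin n) K)) : Set (Fin n →₀ ℕ) :=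
  {d | (∃ f ∈ I, f ≠ 0 ∧ lexp m f = d) ∧
    ∀ f ∈ I, f ≠ 0 → lexp m f ≤ d → lexp m f = d}

/-- `L` is the tuple `O_σ(I)`: the σ-ordered tuple of the minimal generating set
of `LT_σ(I)`. -/
def IsOsIdeal {K : Type*} [Field K] (m : MonomialOrder (Fin n))
    (I : Ideal (MvPolynomial (Fin n) K)) (L : List (Fin n →₀ ℕ)) : Prop :=
  SOrd m L ∧ ∀ d, d ∈ L ↔ d ∈ minGenSet m I

/-- `L` is the σ-ordered tuple of the interreduction of the set `S` of power-products. -/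
def IsOsSet (m : MonomialOrder (Fin n)) (S : Finset (Fin n →₀ ℕ))
    (L : List (Fin n →₀ ℕ)) : Prop :=
  SOrd m L ∧ ∀ d, d ∈ L ↔ (d ∈ S ∧ ∀ s ∈ S, s ≤ d → s = d)

end GB

/-!
Goodness implies luckiness: the leading exponent of `g' ∈ G̃` is a multiple of that of
some `g ∈ G`, so a monomial multiple of `prim(g)` lies in `⟨prim(G)⟩` with the same leading
exponent as `g'`. Minimality of the strong basis forces `lc(g') ∣ lc(prim(g))`, and
`lc(prim(g))` divides `den(g)` because `g` is monic.

Luckiness implies goodness: if `p` divides no leading coefficient of `G̃`, these are units in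
`ℤ_(p)`, so the division algorithm by `G̃` runs over `ℤ_(p)`. Dividing the leading monomial of
`g ∈ G` leaves a remainder that is normal with respect to `G`; as `G` is reduced, so is the
tail of `g`, and uniqueness of normal forms shows that `g` is the image of a polynomial over
`ℤ_(p)`. Hence `p` divides no denominator of `g`.
-/

theorem Nat.Prime.exists_mem_dvd_of_dvd_finsetLcm {ι : Type*} {p : ℕ} (hp : p.Prime)
    {s : Finset ι} {f : ι → ℕ} (h : p ∣ s.lcm f) : ∃ i ∈ s, p ∣ f i :=
  (Prime.dvd_finsetProd_iff hp.prime f).mp (h.trans (s.lcm_dvd_prod f))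

theorem MvPolynomial.coeff_sum_monomial {σ R : Type*} [CommSemiring R]
    (s : Finset (σ →₀ ℕ)) (a : (σ →₀ ℕ) → R) (d : σ →₀ ℕ) :
    coeff d (∑ e ∈ s, monomial e (a e)) = if d ∈ s then a d else 0 := by
  simp [coeff_sum, coeff_monomial]

namespace MonomialOrder

variable {σ : Type*} (m : MonomialOrder σ) {R : Type*} [CommSemiring R]

theorem degree_eq_of_coeff_ne_zero {f : MvPolynomial σ R} {d : σ →₀ ℕ}
    (hd : f.coeff d ≠ 0) (hle : ∀ c ∈ f.support, c ≼[m] d) : m.degree f = d :=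
  m.toSyn.injective <|
    le_antisymm (m.degree_le_iff.mpr hle) (m.le_degree (mem_support_iff.mpr hd))

theorem degree_map_of_injective {S : Type*} [CommSemiring S] {i : R →+* S}
    (hi : Function.Injective i) (f : MvPolynomial σ R) : m.degree (map i f) = m.degree f := by
  rw [degree, degree, support_map_of_injective f hi]

theorem leadingCoeff_map_of_injective {S : Type*} [CommSemiring S] {i : R →+* S}
    (hi : Function.Injective i) (f : MvPolynomial σ R) :
    m.leadingCoeff (map i f) = i (m.leadingCoeff f) := by
  rw [leadingCoeff, degree_map_of_injective m hi, coeff_map, leadingCoeff]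

theorem degree_monomial_one_mul [Nontrivial R] (d : σ →₀ ℕ) {f : MvPolynomial σ R}
    (hf : f ≠ 0) : m.degree (monomial d 1 * f) = d + m.degree f := by
  rw [degree_mul_of_isRegular_left (by simp [isRegular_one]) hf, degree_monomial,
    if_neg one_ne_zero]

theorem leadingCoeff_monomial_one_mul (d : σ →₀ ℕ) (f : MvPolynomial σ R) :
    m.leadingCoeff (monomial d 1 * f) = m.leadingCoeff f := by
  rw [leadingCoeff_mul_of_isRegular_left (by simp [isRegular_one]), leadingCoeff_monomial,
    one_mul]

theorem degree_le_of_leadingTerm_dvd {f g : MvPolynomial σ R} (hf : f ≠ 0)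
    (h : m.leadingTerm g ∣ m.leadingTerm f) : m.degree g ≤ m.degree f := by
  rw [leadingTerm, leadingTerm, monomial_dvd_monomial] at h
  exact h.1.resolve_left (m.leadingCoeff_ne_zero_iff.mpr hf)

end MonomialOrder

namespace GB

open MonomialOrder

variable {n : ℕ} {m : MonomialOrder (Fin n)}

section LeadingData

variable {K : Type*} [CommSemiring K]

theorem lexp_eq_degree (f : MvPolynomial (Fin n) K) : lexp m f = m.degree f := rfl

theorem lcoeff_eq_leadingCoeff (f : MvPolynomial (Fin n) K) : lcoeff m f = m.leadingCoeff f :=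
  rfl

theorem LM_eq_leadingTerm (f : MvPolynomial (Fin n) K) : LM m f = m.leadingTerm f := rfl

end LeadingData

/-- The localization `ℤ_(p)` inside `ℚ`. -/
def localIntegers {p : ℕ} (hp : p.Prime) : Subring ℚ where
  carrier := {q | ¬ p ∣ q.den}
  mul_mem' {a b} ha hb h := (hp.dvd_mul.mp (h.trans (Rat.mul_den_dvd a b))).elim ha hb
  one_mem' := by simp [hp.ne_one]
  add_mem' {a b} ha hb h := (hp.dvd_mul.mp (h.trans (Rat.add_den_dvd a b))).elim ha hb
  zero_mem' := by simp [hp.ne_one]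
  neg_mem' {a} ha := by simpa using ha

theorem mem_localIntegers {p : ℕ} {hp : p.Prime} {q : ℚ} :
    q ∈ localIntegers hp ↔ ¬ p ∣ q.den := Iff.rfl

theorem isUnit_intCast_localIntegers {p : ℕ} (hp : p.Prime) {c : ℤ} (hc : ¬ (p : ℤ) ∣ c) :
    IsUnit (c : localIntegers hp) := by
  have hc0 : c ≠ 0 := by rintro rfl; exact hc (dvd_zero _)
  refine isUnit_iff_exists_inv.mpr ⟨⟨(c : ℚ)⁻¹, ?_⟩, Subtype.ext ?_⟩
  · rw [mem_localIntegers, Rat.inv_intCast_den, if_neg hc0]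
    exact fun h => hc (Int.natCast_dvd.mpr h)
  · simp [hc0]

theorem den_ne_zero (f : MvPolynomial (Fin n) ℚ) : den f ≠ 0 := by
  simp [den, Finset.lcm_eq_zero_iff]

theorem coeff_intScale (f : MvPolynomial (Fin n) ℚ) (d : Fin n →₀ ℕ) :
    ((coeff d (intScale f) : ℤ) : ℚ) = coeff d f * den f := by
  rw [intScale, coeff_sum_monomial]
  split_ifs with hd
  · obtain ⟨k, hk⟩ : (coeff d f).den ∣ den f := Finset.dvd_lcm hd
    rw [hk, Nat.cast_mul, ← mul_assoc, Rat.mul_den_eq_num, ← Int.cast_natCast, ← Int.cast_mul,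
      Rat.num_intCast]
  · simp [notMem_support_iff.mp hd]

noncomputable def intContent (f : MvPolynomial (Fin n) ℚ) : ℤ :=
  (intScale f).support.gcd fun e => coeff e (intScale f)

theorem intContent_dvd_coeff (f : MvPolynomial (Fin n) ℚ) (d : Fin n →₀ ℕ) :
    intContent f ∣ coeff d (intScale f) := by
  by_cases hd : d ∈ (intScale f).support
  · exact Finset.gcd_dvd hd
  · simp [notMem_support_iff.mp hd]

theorem intContent_ne_zero {f : MvPolynomial (Fin n) ℚ} (hf : f ≠ 0) : intContent f ≠ 0 := by
  obtain ⟨d, hd⟩ := ne_zero_iff.mp hf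
  intro h0
  have hd0 : coeff d (intScale f) = 0 := zero_dvd_iff.mp (h0 ▸ intContent_dvd_coeff f d)
  have h := coeff_intScale f d
  rw [hd0, Int.cast_zero, eq_comm, mul_eq_zero, Nat.cast_eq_zero] at h
  exact h.elim hd (den_ne_zero f)

theorem coeff_primQ (f : MvPolynomial (Fin n) ℚ) (d : Fin n →₀ ℕ) :
    coeff d (primQ f) = coeff d (intScale f) / intContent f := by
  rw [primQ, coeff_sum_monomial]
  split_ifs with hd
  · rfl
  · simp [notMem_support_iff.mp hd]

theorem map_primQ {f : MvPolynomial (Fin n) ℚ} (hf : f ≠ 0) :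
    map (Int.castRingHom ℚ) (primQ f) = C ((den f : ℚ) / intContent f) * f := by
  ext d
  rw [coeff_map, coeff_C_mul, coeff_primQ, eq_intCast, Int.cast_div (intContent_dvd_coeff f d)
    (Int.cast_ne_zero.mpr (intContent_ne_zero hf)), coeff_intScale]
  ring

theorem den_div_intContent_ne_zero {f : MvPolynomial (Fin n) ℚ} (hf : f ≠ 0) :
    (den f : ℚ) / intContent f ≠ 0 := by
  simp [den_ne_zero, intContent_ne_zero hf]

theorem degree_primQ {f : MvPolynomial (Fin n) ℚ} (hf : f ≠ 0) :
    m.degree (primQ f) = m.degree f := by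
  rw [← degree_map_of_injective m (Int.castRingHom ℚ).injective_int, map_primQ hf,
    ← smul_eq_C_mul,
    degree_smul_of_isRegular (IsUnit.mk0 _ (den_div_intContent_ne_zero hf)).isRegular]

theorem primQ_ne_zero {f : MvPolynomial (Fin n) ℚ} (hf : f ≠ 0) : primQ f ≠ 0 := by
  intro h0
  simpa [h0, hf, den_div_intContent_ne_zero hf] using map_primQ hf

theorem leadingCoeff_primQ_dvd_den {f : MvPolynomial (Fin n) ℚ} (hf : m.leadingCoeff f = 1) :
    m.leadingCoeff (primQ f) ∣ den f := by
  have hf0 : f ≠ 0 := by rintro rfl; simp at hf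
  have hlc := leadingCoeff_map_of_injective m (Int.castRingHom ℚ).injective_int (primQ f)
  rw [map_primQ hf0, leadingCoeff, ← smul_eq_C_mul,
    degree_smul_of_isRegular (IsUnit.mk0 _ (den_div_intContent_ne_zero hf0)).isRegular,
    coeff_smul, ← leadingCoeff, hf, smul_eq_mul, mul_one, eq_intCast] at hlc
  refine ⟨intContent f, Int.cast_injective (α := ℚ) ?_⟩
  push_cast
  rw [← hlc, div_mul_cancel₀ _ (Int.cast_ne_zero.mpr (intContent_ne_zero hf0))]

theorem map_mem_of_mem_span_primQ {G : Finset (MvPolynomial (Fin n) ℚ)}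
    {I : Ideal (MvPolynomial (Fin n) ℚ)} (hGI : (G : Set (MvPolynomial (Fin n) ℚ)) ⊆ I)
    {f : MvPolynomial (Fin n) ℤ}
    (hf : f ∈ Ideal.span (primQ '' (G : Set (MvPolynomial (Fin n) ℚ)))) :
    map (Int.castRingHom ℚ) f ∈ I := by
  refine (?_ : Ideal.map (map (Int.castRingHom ℚ)) _ ≤ I) (Ideal.mem_map_of_mem _ hf)
  rw [Ideal.map_span, Ideal.span_le]
  rintro _ ⟨_, ⟨g, hg, rfl⟩, rfl⟩
  by_cases hg0 : g = 0
  · simp [hg0, primQ, intScale]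
  · rw [SetLike.mem_coe, map_primQ hg0]
    exact I.mul_mem_left _ (hGI hg)

section Field

variable {K : Type*} [Field K] {G : Finset (MvPolynomial (Fin n) K)}
  {I : Ideal (MvPolynomial (Fin n) K)}

theorem IsGB.ne_zero (hG : IsGB m G I) {g : MvPolynomial (Fin n) K} (hg : g ∈ G) : g ≠ 0 :=
  fun h => hG.1 (h ▸ hg)

theorem IsGB.eq_zero_of_forall_not_degree_le (hG : IsGB m G I) {z : MvPolynomial (Fin n) K}
    (hz : z ∈ I) (hnormal : ∀ d ∈ z.support, ∀ g ∈ G, ¬ m.degree g ≤ d) : z = 0 := by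
  by_contra h
  obtain ⟨g, hg, hle⟩ := hG.2.2.2 z hz h
  exact hnormal _ (m.degree_mem_support h) g hg hle

theorem IsReducedGB.not_degree_le_of_mem_support_sub_leadingTerm (hG : IsReducedGB m G I)
    {g : MvPolynomial (Fin n) K} (hg : g ∈ G) {d : Fin n →₀ ℕ}
    (hd : d ∈ (g - m.leadingTerm g).support) {g' : MvPolynomial (Fin n) K} (hg' : g' ∈ G) :
    ¬ m.degree g' ≤ d := by
  have hne : d ≠ m.degree g := by
    rintro rfl
    simp [leadingTerm, leadingCoeff] at hd
  have hdg : d ∈ g.support := by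
    simpa [leadingTerm, coeff_monomial, Ne.symm hne] using hd
  intro hle
  by_cases hgg : g' = g
  · subst hgg
    exact hne (m.toSyn.injective (le_antisymm (m.le_degree hdg) (m.toSyn_monotone hle)))
  · exact hG.2.2 g hg d hdg g' hg' hgg hle

theorem IsReducedGB.subset_range_map {R : Type*} [CommRing R] {i : R →+* K}
    (hG : IsReducedGB m G I) {B : Set (MvPolynomial (Fin n) R)}
    (hB : ∀ b ∈ B, IsUnit (m.leadingCoeff b)) (hBI : ∀ b ∈ B, map i b ∈ I)
    (hcover : ∀ g ∈ G, ∃ b ∈ B, m.degree b ≤ m.degree g) :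
    ∀ g ∈ G, g ∈ Set.range (map i) := by
  intro g hg
  obtain ⟨q, r, hqr, -, hr⟩ := m.div_set hB (monomial (m.degree g) 1)
  set w := monomial (m.degree g) 1 - r
  have hwB : w ∈ Ideal.span B := by
    have : w = Finsupp.linearCombination _ (fun b : B => (b : MvPolynomial (Fin n) R)) q := by
      rw [show w = monomial (m.degree g) 1 - r from rfl, hqr, add_sub_cancel_right]
    exact (Finsupp.mem_span_iff_linearCombination _ _ _).mpr ⟨q, this.symm⟩
  have hwI : map i w ∈ I := by
    refine (?_ : Ideal.map (map i) (Ideal.span B) ≤ I) (Ideal.mem_map_of_mem _ hwB)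
    rw [Ideal.map_span, Ideal.span_le]
    rintro _ ⟨b, hb, rfl⟩
    exact hBI b hb
  have hz : g - map i w = (g - m.leadingTerm g) + map i r := by
    rw [map_sub, map_monomial, map_one, leadingTerm, ← lcoeff_eq_leadingCoeff, hG.2.1 g hg]
    ring
  suffices hz0 : g - map i w = 0 from ⟨w, (sub_eq_zero.mp hz0).symm⟩
  refine hG.1.eq_zero_of_forall_not_degree_le (I.sub_mem (hG.1.2.1 hg) hwI) ?_
  rw [hz]
  intro d hd g' hg' hle
  rcases Finset.mem_union.mp (support_add hd) with hd | hd
  · exact hG.not_degree_le_of_mem_support_sub_leadingTerm hg hd hg' hle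
  · obtain ⟨b, hb, hbg⟩ := hcover g' hg'
    exact hr d (support_map_subset _ _ hd) b hb (hbg.trans hle)

end Field

theorem IsStrongGB.mem {Gt : Finset (MvPolynomial (Fin n) ℤ)}
    {J : Ideal (MvPolynomial (Fin n) ℤ)} (hGt : IsStrongGB m Gt J) {g : MvPolynomial (Fin n) ℤ}
    (hg : g ∈ Gt) : g ∈ J :=
  hGt.2.1 ▸ Ideal.subset_span hg

theorem IsStrongGB.ne_zero {Gt : Finset (MvPolynomial (Fin n) ℤ)}
    {J : Ideal (MvPolynomial (Fin n) ℤ)} (hGt : IsStrongGB m Gt J) {g : MvPolynomial (Fin n) ℤ}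
    (hg : g ∈ Gt) : g ≠ 0 :=
  fun h => hGt.1 (h ▸ hg)

/-- The Bézout combination of `g` and `f` with leading coefficient `gcd (lc g) (lc f)` must be
covered by `g` itself, since any other cover would divide the leading term of `g`. -/
theorem IsMinStrongGB.leadingCoeff_dvd {Gt : Finset (MvPolynomial (Fin n) ℤ)}
    {J : Ideal (MvPolynomial (Fin n) ℤ)} (hGt : IsMinStrongGB m Gt J)
    {g : MvPolynomial (Fin n) ℤ} (hg : g ∈ Gt) {f : MvPolynomial (Fin n) ℤ} (hf : f ∈ J)
    (hdeg : m.degree f = m.degree g) : m.leadingCoeff g ∣ m.leadingCoeff f := by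
  set a := m.leadingCoeff g
  set c := m.leadingCoeff f
  have hgJ : g ∈ J := hGt.1.mem hg
  have ha : a ≠ 0 := m.leadingCoeff_ne_zero_iff.mpr (hGt.1.ne_zero hg)
  have he : (Int.gcd a c : ℤ) ≠ 0 := by simp [Int.gcd_eq_zero_iff, ha]
  set h := C (Int.gcdA a c) * g + C (Int.gcdB a c) * f
  have hhJ : h ∈ J := J.add_mem (J.mul_mem_left _ hgJ) (J.mul_mem_left _ hf)
  have hcoeff : h.coeff (m.degree g) = Int.gcd a c := by
    have hfc : f.coeff (m.degree g) = c := by rw [← hdeg]; rfl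
    rw [coeff_add, coeff_C_mul, coeff_C_mul, hfc, Int.gcd_eq_gcd_ab, mul_comm a, mul_comm c]
    rfl
  have hdeg_h : m.degree h = m.degree g := by
    refine m.degree_eq_of_coeff_ne_zero (hcoeff ▸ he) fun d hd => ?_
    have : g.coeff d ≠ 0 ∨ f.coeff d ≠ 0 := by
      by_contra! H
      simp only [h, mem_support_iff, coeff_add, coeff_C_mul, H.1, H.2] at hd
      simp at hd
    rcases this with hgd | hfd
    · exact m.le_degree (mem_support_iff.mpr hgd)
    · exact hdeg ▸ m.le_degree (mem_support_iff.mpr hfd)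
  have hh0 : h ≠ 0 := fun h0 => he (by rw [← hcoeff, h0, coeff_zero])
  have hLT : m.leadingTerm h = monomial (m.degree g) (Int.gcd a c : ℤ) := by
    rw [leadingTerm, leadingCoeff, hdeg_h, hcoeff]
  obtain ⟨g₃, hg₃, hdvd⟩ := hGt.1.2.2 h hhJ hh0
  rw [LM_eq_leadingTerm, LM_eq_leadingTerm, hLT] at hdvd
  have hg₃g : g₃ = g := by
    by_contra hne
    refine hGt.2 g₃ hg₃ g hg hne (hdvd.trans ?_)
    exact monomial_dvd_monomial.mpr ⟨Or.inr le_rfl, Int.gcd_dvd_left a c⟩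
  rw [hg₃g, leadingTerm, monomial_dvd_monomial] at hdvd
  exact hdvd.2.trans (Int.gcd_dvd_right a c)

theorem IsReducedGB.leadingCoeff_dvd_denF {G : Finset (MvPolynomial (Fin n) ℚ)}
    {I : Ideal (MvPolynomial (Fin n) ℚ)} (hG : IsReducedGB m G I)
    {Gt : Finset (MvPolynomial (Fin n) ℤ)}
    (hGt : IsMinStrongGB m Gt (Ideal.span (primQ '' (G : Set (MvPolynomial (Fin n) ℚ)))))
    {g' : MvPolynomial (Fin n) ℤ} (hg' : g' ∈ Gt) : m.leadingCoeff g' ∣ (denF G : ℤ) := by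
  have hinj := (Int.castRingHom ℚ).injective_int
  have hg'J := hGt.1.mem hg'
  have hg'0 : map (Int.castRingHom ℚ) g' ≠ 0 :=
    (map_injective _ hinj).ne_iff' (map_zero _) |>.mpr (hGt.1.ne_zero hg')
  obtain ⟨g, hg, hle⟩ := hG.1.2.2.2 _ (map_mem_of_mem_span_primQ hG.1.2.1 hg'J) hg'0
  rw [lexp_eq_degree, lexp_eq_degree, degree_map_of_injective m hinj] at hle
  have hg0 := hG.1.ne_zero hg
  set f := monomial (m.degree g' - m.degree g) 1 * primQ g
  have hfJ : f ∈ Ideal.span (primQ '' (G : Set (MvPolynomial (Fin n) ℚ))) :=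
    Ideal.mul_mem_left _ _ (Ideal.subset_span ⟨g, hg, rfl⟩)
  have hdeg : m.degree f = m.degree g' := by
    rw [degree_monomial_one_mul m _ (primQ_ne_zero hg0), degree_primQ hg0,
      tsub_add_cancel_of_le hle]
  calc m.leadingCoeff g' ∣ m.leadingCoeff f := hGt.leadingCoeff_dvd hg' hfJ hdeg
    _ = m.leadingCoeff (primQ g) := leadingCoeff_monomial_one_mul m _ _
    _ ∣ den g := leadingCoeff_primQ_dvd_den (hG.2.1 g hg)
    _ ∣ denF G := Int.natCast_dvd_natCast.mpr (Finset.dvd_lcm hg)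

theorem not_dvd_den_of_mem_range_map {p : ℕ} (hp : p.Prime) {f : MvPolynomial (Fin n) ℚ}
    (hf : f ∈ Set.range (map (localIntegers hp).subtype)) : ¬ p ∣ den f := by
  obtain ⟨w, rfl⟩ := hf
  intro h
  obtain ⟨d, -, hd⟩ := hp.exists_mem_dvd_of_dvd_finsetLcm h
  rw [coeff_map] at hd
  exact (coeff d w).2 hd

theorem IsReducedGB.not_dvd_denF {G : Finset (MvPolynomial (Fin n) ℚ)}
    {I : Ideal (MvPolynomial (Fin n) ℚ)} (hG : IsReducedGB m G I)
    {Gt : Finset (MvPolynomial (Fin n) ℤ)}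
    (hGt : IsMinStrongGB m Gt (Ideal.span (primQ '' (G : Set (MvPolynomial (Fin n) ℚ)))))
    {p : ℕ} (hp : p.Prime) (hlucky : ∀ g ∈ Gt, ¬ (p : ℤ) ∣ m.leadingCoeff g) :
    ¬ p ∣ denF G := by
  set S := localIntegers hp
  have hinj : Function.Injective (Int.castRingHom S) := fun a b h =>
    Int.cast_injective (α := ℚ) (by simpa using congrArg Subtype.val h)
  have hcomp : S.subtype.comp (Int.castRingHom S) = Int.castRingHom ℚ := RingHom.ext_int _ _
  set B := map (Int.castRingHom S) '' (Gt : Set (MvPolynomial (Fin n) ℤ))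
  have hunit : ∀ b ∈ B, IsUnit (m.leadingCoeff b) := by
    rintro _ ⟨g, hg, rfl⟩
    rw [leadingCoeff_map_of_injective m hinj]
    exact isUnit_intCast_localIntegers hp (hlucky g hg)
  have hBI : ∀ b ∈ B, map S.subtype b ∈ I := by
    rintro _ ⟨g, hg, rfl⟩
    rw [map_map, hcomp]
    exact map_mem_of_mem_span_primQ hG.1.2.1 (hGt.1.mem hg)
  have hcover : ∀ g ∈ G, ∃ b ∈ B, m.degree b ≤ m.degree g := by
    intro g hg
    have hg0 := hG.1.ne_zero hg
    obtain ⟨g', hg', hdvd⟩ :=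
      hGt.1.2.2 _ (Ideal.subset_span ⟨g, hg, rfl⟩) (primQ_ne_zero hg0)
    refine ⟨_, ⟨g', hg', rfl⟩, ?_⟩
    rw [degree_map_of_injective m hinj, ← degree_primQ hg0]
    exact m.degree_le_of_leadingTerm_dvd (primQ_ne_zero hg0) hdvd
  have hrange := hG.subset_range_map hunit hBI hcover
  intro h
  obtain ⟨g, hg, hpg⟩ := hp.exists_mem_dvd_of_dvd_finsetLcm h
  exact not_dvd_den_of_mem_range_map hp (hrange g hg) hpg

end GB

theorem stmt13_general {n : ℕ} (m : MonomialOrder (Fin n))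
    (F : Finset (MvPolynomial (Fin n) ℚ))
    (G : Finset (MvPolynomial (Fin n) ℚ))
    (hG : GB.IsReducedGB m G (Ideal.span (F : Set (MvPolynomial (Fin n) ℚ))))
    (Gt : Finset (MvPolynomial (Fin n) ℤ))
    (hGt : GB.IsMinStrongGB m Gt
      (Ideal.span (GB.primQ '' (G : Set (MvPolynomial (Fin n) ℚ)))))
    (p : ℕ) (hp : p.Prime) :
    ((∀ g ∈ Gt, ¬ (p : ℤ) ∣ GB.lcoeff m g) ↔ ¬ p ∣ GB.denF G) :=
  ⟨hG.not_dvd_denF hGt hp, fun hden _ hg hpg =>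
    hden (Int.natCast_dvd_natCast.mp (hpg.trans (hG.leadingCoeff_dvd_denF hGt hg)))⟩

/-- `p` is σ-Pauer-lucky for `prim(G_σ)` iff `p` is σ-good for `⟨F⟩`. -/
theorem stmt13 {n : ℕ} (m : MonomialOrder (Fin n))
    (F : Finset (MvPolynomial (Fin n) ℚ)) (hF0 : (0 : MvPolynomial (Fin n) ℚ) ∉ F)
    (G : Finset (MvPolynomial (Fin n) ℚ))
    (hG : GB.IsReducedGB m G (Ideal.span (F : Set (MvPolynomial (Fin n) ℚ))))
    (Gt : Finset (MvPolynomial (Fin n) ℤ))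
    (hGt : GB.IsMinStrongGB m Gt
      (Ideal.span (GB.primQ '' (G : Set (MvPolynomial (Fin n) ℚ)))))
    (p : ℕ) (hp : p.Prime) :
    ((∀ g ∈ Gt, ¬ (p : ℤ) ∣ GB.lcoeff m g) ↔ ¬ p ∣ GB.denF G) :=
  stmt13_general m F G hG Gt hGt p hp
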